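/- arXiv:1204.5922 — 3 statements merged into one kernel-verified Lean document; each statement's English description precedes it below -/
import Mathlib

section
/- Let (G, ≤) be a lefthanded graph. For every vertex v, the set μ(D_v) together with the disjoint union over u ∈ N_v of μ(D_u) equals the disjoint union of N_v and μ(F_v). That is, μ(D_v) ∪ (⋃_{u∈N_v} μ(D_u)) = N_v ∪ μ(F_v), and all unions involved are disjoint. -/
open scoped Classical

/-- A tree order: whenever `w < u` and `w < v`, the elements `u` and `v` are comparable. -/
def TreeOrder (V : Type*) [PartialOrder V] : Prop :=
  ∀ w u v : V, w < u → w < v → (u ≤ v ∨ v ≤ u)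

/-- A lefthanded graph with respect to the partial order on `V`. -/
def Lefthanded {V : Type*} [PartialOrder V] (G : SimpleGraph V) : Prop :=
  TreeOrder V ∧
  (∀ u v : V, G.Adj u v → u ≤ v ∨ v ≤ u) ∧
  (∀ w u v : V, w < u → u < v → G.Adj v w → G.Adj v u)

/-- `D_v = {u : u < v}`. -/
noncomputable def Dset {V : Type*} [Fintype V] [PartialOrder V] (v : V) : Finset V :=
  Finset.univ.filter (fun u => u < v)

/-- `D̄_v = D_v ∪ {v}`. -/
noncomputable def Dbar {V : Type*} [Fintype V] [DecidableEq V] [PartialOrder V] (v : V) :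
    Finset V :=
  insert v (Dset v)

/-- `N_v = {u < v : u ~ v}`. -/
noncomputable def Nset {V : Type*} [Fintype V] [PartialOrder V] (G : SimpleGraph V) (v : V) :
    Finset V :=
  Finset.univ.filter (fun u => u < v ∧ G.Adj u v)

/-- `F_v = D_v \ N_v`. -/
noncomputable def Fset {V : Type*} [Fintype V] [DecidableEq V] [PartialOrder V]
    (G : SimpleGraph V) (v : V) : Finset V :=
  Dset v \ Nset G v

/-- `μ(U)`: the set of maximal elements of `U`. -/
noncomputable def maxElts {V : Type*} [PartialOrder V] (U : Finset V) : Finset V :=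
  U.filter (fun u => ∀ w ∈ U, ¬ u < w)

/-- `I` is an independent set of `G`. -/
def IndepSet {V : Type*} (G : SimpleGraph V) (I : Finset V) : Prop :=
  ∀ u ∈ I, ∀ w ∈ I, ¬ G.Adj u w

/-- `B(S) = Σ_{I ⊆ S, I independent} (−1)^{|I|} Π_{v∈I} p_v`. -/
noncomputable def Bfun {V : Type*} [Fintype V] (G : SimpleGraph V) (p : V → ℝ) (S : Finset V) :
    ℝ :=
  ∑ I ∈ S.powerset.filter (fun I => IndepSet G I), (-1 : ℝ) ^ I.card * ∏ v ∈ I, p v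

/-- `𝔮(S) = Σ_{I ⊇ S, I independent} (−1)^{|I|−|S|} Π_{v∈I} p_v`. -/
noncomputable def qfun {V : Type*} [Fintype V] (G : SimpleGraph V) (p : V → ℝ) (S : Finset V) :
    ℝ :=
  ∑ I ∈ Finset.univ.powerset.filter (fun I => IndepSet G I ∧ S ⊆ I),
    (-1 : ℝ) ^ (I.card - S.card) * ∏ v ∈ I, p v

/-- A down-closed set. -/
def DownClosed {V : Type*} [Fintype V] [PartialOrder V] (S : Finset V) : Prop :=
  ∀ s ∈ S, Dset s ⊆ S

/-!
The maximal elements of `D_v` are exactly the lower covers of `v`. In a tree order an element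
has at most one upper cover, which gives the disjointness of the `μ(D_u)`. Lefthandedness makes
`N_v` an up-set of `D_v`, so a cover `x ⋖ u` with `u ∈ N_v` and `x ∉ N_v` is maximal in `F_v`;
conversely, a cover `x ⋖ u ≤ v` of an element `x` of `N_v ∪ μ(F_v)` lies in `N_v` or is `v`.
-/

section PartialOrder

variable {V : Type*} [PartialOrder V] {u u' v x : V}

lemma mem_maxElts {U : Finset V} : u ∈ maxElts U ↔ u ∈ U ∧ ∀ w ∈ U, ¬ u < w := by
  simp [maxElts]

lemma TreeOrder.eq_of_covBy (h : TreeOrder V) (hu : x ⋖ u) (hu' : x ⋖ u') : u = u' := by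
  rcases h x u u' hu.lt hu'.lt with huu' | hu'u
  · exact huu'.eq_of_not_lt fun hlt => hu'.2 hu.lt hlt
  · exact (hu'u.eq_of_not_lt fun hlt => hu.2 hu'.lt hlt).symm

end PartialOrder

section Fintype

variable {V : Type*} [Fintype V] [PartialOrder V] {G : SimpleGraph V} {u u' v x : V}

lemma mem_Dset : u ∈ Dset v ↔ u < v := by simp [Dset]

lemma mem_Nset : u ∈ Nset G v ↔ u < v ∧ G.Adj u v := by simp [Nset]

lemma mem_maxElts_Dset : x ∈ maxElts (Dset v) ↔ x ⋖ v := by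
  simp only [mem_maxElts, mem_Dset]
  exact ⟨fun h => ⟨h.1, fun w hxw hwv => h.2 w hwv hxw⟩,
    fun h => ⟨h.1, fun w hwv hxw => h.2 hxw hwv⟩⟩

lemma disjoint_maxElts_Dset_of_lt (huv : u < v) :
    Disjoint (maxElts (Dset v)) (maxElts (Dset u)) := by
  refine Finset.disjoint_left.2 fun x hxv hxu => ?_
  exact (mem_maxElts_Dset.1 hxv).2 (mem_maxElts_Dset.1 hxu).lt huv

lemma TreeOrder.disjoint_maxElts_Dset (h : TreeOrder V) (hne : u ≠ u') :
    Disjoint (maxElts (Dset u)) (maxElts (Dset u')) := by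
  refine Finset.disjoint_left.2 fun x hxu hxu' => hne ?_
  exact h.eq_of_covBy (mem_maxElts_Dset.1 hxu) (mem_maxElts_Dset.1 hxu')

lemma Lefthanded.mem_Nset_of_le (hG : Lefthanded G) (hx : x ∈ Nset G v) (hxu : x ≤ u)
    (huv : u < v) : u ∈ Nset G v := by
  rcases hxu.lt_or_eq with hxu | rfl
  · exact mem_Nset.2 ⟨huv, (hG.2.2 x u v hxu huv (mem_Nset.1 hx).2.symm).symm⟩
  · exact hx

variable [DecidableEq V]

lemma disjoint_Nset_maxElts_Fset : Disjoint (Nset G v) (maxElts (Fset G v)) :=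
  Finset.disjoint_sdiff.mono_right fun _ hx => (mem_maxElts.1 hx).1

lemma mem_maxElts_Fset_of_covBy (hxv : x ⋖ v) (hx : x ∉ Nset G v) :
    x ∈ maxElts (Fset G v) := by
  refine mem_maxElts.2 ⟨Finset.mem_sdiff.2 ⟨mem_Dset.2 hxv.lt, hx⟩, fun w hw hxw => ?_⟩
  exact hxv.2 hxw (mem_Dset.1 (Finset.mem_sdiff.1 hw).1)

lemma Lefthanded.mem_maxElts_Fset_of_covBy (hG : Lefthanded G) (hxu : x ⋖ u)
    (hu : u ∈ Nset G v) (hx : x ∉ Nset G v) : x ∈ maxElts (Fset G v) := by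
  have hxv : x < v := hxu.lt.trans (mem_Nset.1 hu).1
  refine mem_maxElts.2 ⟨Finset.mem_sdiff.2 ⟨mem_Dset.2 hxv, hx⟩, fun w hw hxw => ?_⟩
  obtain ⟨hwv, hwN⟩ := Finset.mem_sdiff.1 hw
  rcases hG.1 x u w hxu.lt hxw with huw | hwu
  · exact hwN (hG.mem_Nset_of_le hu huw (mem_Dset.1 hwv))
  · rcases hwu.lt_or_eq with hwu | rfl
    · exact hxu.2 hxw hwu
    · exact hwN hu

lemma Lefthanded.covBy_or_exists_covBy (hG : Lefthanded G)
    (hx : x ∈ Nset G v ∪ maxElts (Fset G v)) : x ⋖ v ∨ ∃ u ∈ Nset G v, x ⋖ u := by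
  have hxv : x < v := by
    rcases Finset.mem_union.1 hx with hxN | hxF
    · exact (mem_Nset.1 hxN).1
    · exact mem_Dset.1 (Finset.mem_sdiff.1 (mem_maxElts.1 hxF).1).1
  obtain ⟨u, hxu, huv⟩ := exists_covBy_le_of_lt hxv
  rcases huv.lt_or_eq with huv | rfl
  · refine Or.inr ⟨u, ?_, hxu⟩
    rcases Finset.mem_union.1 hx with hxN | hxF
    · exact hG.mem_Nset_of_le hxN hxu.le huv
    · by_contra huN
      exact (mem_maxElts.1 hxF).2 u (Finset.mem_sdiff.2 ⟨mem_Dset.2 huv, huN⟩) hxu.lt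
  · exact Or.inl hxu

lemma Lefthanded.maxElts_Dset_union_biUnion (hG : Lefthanded G) (v : V) :
    maxElts (Dset v) ∪ (Nset G v).biUnion (fun u => maxElts (Dset u))
      = Nset G v ∪ maxElts (Fset G v) := by
  ext x
  rw [Finset.mem_union]
  simp only [Finset.mem_biUnion, mem_maxElts_Dset]
  refine ⟨fun h => ?_, hG.covBy_or_exists_covBy⟩
  by_cases hx : x ∈ Nset G v
  · exact Finset.mem_union_left _ hx
  · refine Finset.mem_union_right _ ?_
    rcases h with hxv | ⟨u, hu, hxu⟩
    · exact _root_.mem_maxElts_Fset_of_covBy hxv hx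
    · exact hG.mem_maxElts_Fset_of_covBy hxu hu hx

end Fintype

theorem stmt1 {V : Type*} [Fintype V] [DecidableEq V] [PartialOrder V]
    (G : SimpleGraph V) (hG : Lefthanded G) (v : V) :
    (maxElts (Dset v) ∪ (Nset G v).biUnion (fun u => maxElts (Dset u))
        = Nset G v ∪ maxElts (Fset G v)) ∧
    (∀ u ∈ Nset G v, Disjoint (maxElts (Dset v)) (maxElts (Dset u))) ∧
    (∀ u ∈ Nset G v, ∀ u' ∈ Nset G v, u ≠ u' →
        Disjoint (maxElts (Dset u)) (maxElts (Dset u'))) ∧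
    Disjoint (Nset G v) (maxElts (Fset G v)) :=
  ⟨hG.maxElts_Dset_union_biUnion v,
    fun _ hu => disjoint_maxElts_Dset_of_lt (mem_Nset.1 hu).1,
    fun _ _ _ _ hne => hG.1.disjoint_maxElts_Dset hne,
    disjoint_Nset_maxElts_Fset⟩
end

section
/- Let G be a finite graph labeled with p_v ∈ [0,1]. With 𝔮(S) = Σ_{I ⊇ S, I independent} (−1)^{|I|−|S|} Π_{v∈I} p_v and B(S) = Σ_{I ⊆ S, I independent} (−1)^{|I|} Π_{v∈I} p_v, for every S ⊆ V one has B(S) = Σ_{R ⊆ V∖S} 𝔮(R). -/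
open scoped Classical

/-!
Exchanging the two sums, an independent set `I` contributes `(-1)^|I| Π_{v∈I} p_v` times
`Σ_{R ⊆ I \ S} (-1)^|R|`, and this alternating sum vanishes unless `I ⊆ S`, where it is `1`.
-/

open Finset

lemma sum_powerset_neg_one_pow_card_eq_ite {α R : Type*} [DecidableEq α] [Ring R]
    (x : Finset α) : ∑ m ∈ x.powerset, (-1 : R) ^ #m = if x = ∅ then 1 else 0 := by
  exact_mod_cast congrArg (Int.cast : ℤ → R) sum_powerset_neg_one_pow_card

lemma neg_one_pow_sub_eq_mul {R : Type*} [Ring R] {a b : ℕ} (h : b ≤ a) :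
    (-1 : R) ^ (a - b) = (-1) ^ a * (-1) ^ b := by
  calc (-1 : R) ^ (a - b) = (-1) ^ (a - b) * (-1) ^ (2 * b) := by
        rw [pow_mul, neg_one_sq, one_pow, mul_one]
    _ = (-1) ^ a * (-1) ^ b := by
        rw [← pow_add, ← pow_add]
        congr 1
        omega

theorem sum_powerset_sdiff_sum_superset_neg_one_pow {α R : Type*} [Fintype α] [DecidableEq α]
    [CommRing R] (S : Finset α) (f : Finset α → R) :
    ∑ T ∈ (univ \ S).powerset, ∑ I ∈ univ.powerset with T ⊆ I, (-1 : R) ^ (#I - #T) * f I =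
      ∑ I ∈ S.powerset, (-1 : R) ^ #I * f I := by
  calc _ = ∑ I ∈ univ.powerset, ∑ T ∈ (I \ S).powerset, (-1 : R) ^ (#I - #T) * f I :=
        sum_comm' fun T I => by
          simp only [mem_powerset, mem_filter, subset_sdiff, subset_univ, true_and]
          tauto
    _ = ∑ I ∈ univ.powerset, (-1 : R) ^ #I * f I * ∑ T ∈ (I \ S).powerset, (-1 : R) ^ #T := by
        refine sum_congr rfl fun I _ => ?_
        rw [mul_sum]
        refine sum_congr rfl fun T hT => ?_
        rw [neg_one_pow_sub_eq_mul (card_le_card ((mem_powerset.1 hT).trans sdiff_subset))]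
        ring
    _ = ∑ I ∈ univ.powerset with I ⊆ S, (-1 : R) ^ #I * f I := by
        simp only [sum_powerset_neg_one_pow_card_eq_ite, sdiff_eq_empty_iff_subset, mul_ite,
          mul_one, mul_zero, sum_filter]
    _ = ∑ I ∈ S.powerset, (-1 : R) ^ #I * f I := by
        congr 1
        ext I
        simp

noncomputable def indepWeight {V : Type*} (G : SimpleGraph V) (p : V → ℝ) (I : Finset V) : ℝ :=
  if IndepSet G I then ∏ v ∈ I, p v else 0

lemma qfun_eq_sum_superset {V : Type*} [Fintype V] [DecidableEq V] (G : SimpleGraph V)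
    (p : V → ℝ) (T : Finset V) :
    qfun G p T = ∑ I ∈ univ.powerset with T ⊆ I, (-1 : ℝ) ^ (#I - #T) * indepWeight G p I := by
  simp only [qfun, indepWeight, mul_ite, mul_zero, ← sum_filter, filter_filter]
  congr 1
  ext I
  simp only [mem_filter]
  tauto

lemma Bfun_eq_sum_powerset {V : Type*} [Fintype V] (G : SimpleGraph V) (p : V → ℝ)
    (S : Finset V) :
    Bfun G p S = ∑ I ∈ S.powerset, (-1 : ℝ) ^ #I * indepWeight G p I := by
  simp only [Bfun, indepWeight, mul_ite, mul_zero, ← sum_filter]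

theorem stmt5_general {V : Type*} [Fintype V] [DecidableEq V] (G : SimpleGraph V) (p : V → ℝ)
    (S : Finset V) :
    Bfun G p S = ∑ R ∈ ((Finset.univ : Finset V) \ S).powerset, qfun G p R := by
  simp only [qfun_eq_sum_superset, Bfun_eq_sum_powerset,
    sum_powerset_sdiff_sum_superset_neg_one_pow]

theorem stmt5 {V : Type*} [Fintype V] [DecidableEq V] (G : SimpleGraph V) (p : V → ℝ)
    (hp : ∀ v, 0 ≤ p v ∧ p v ≤ 1) (S : Finset V) :
    Bfun G p S = ∑ R ∈ ((Finset.univ : Finset V) \ S).powerset, qfun G p R :=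
  stmt5_general G p S
end

section
/- Every graph that is lefthanded with respect to some tree order is chordal: it contains no induced cycle of length at least 4. -/
open scoped Classical

theorem ZMod.natCast_ne_zero_of_pos_of_lt {n k : ℕ} (hk : 0 < k) (hkn : k < n) :
    (k : ZMod n) ≠ 0 := by
  rw [Ne, ZMod.natCast_eq_zero_iff]
  exact fun hdvd => hk.ne' (Nat.eq_zero_of_dvd_of_lt hdvd hkn)

namespace Lefthanded

variable {V : Type*} [PartialOrder V] {G : SimpleGraph V}

theorem lt_of_adj_of_not_lt (hG : Lefthanded G) {u v : V} (huv : G.Adj u v) (hvu : ¬ v < u) :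
    u < v :=
  (hG.2.1 u v huv).elim (·.lt_of_ne huv.ne) fun hle => absurd (hle.lt_of_ne huv.ne.symm) hvu

theorem adj_of_lt_of_lt (hG : Lefthanded G) {w u v : V} (hu : G.Adj w u) (hv : G.Adj w v)
    (hwu : w < u) (hwv : w < v) (huv : u ≠ v) : G.Adj u v := by
  rcases hG.1 w u v hwu hwv with hle | hle
  · exact (hG.2.2 w u v hwu (hle.lt_of_ne huv) hv.symm).symm
  · exact hG.2.2 w v u hwv (hle.lt_of_ne huv.symm) hu.symm

/-- Applied at a minimal vertex of a cycle, this produces a chord. -/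
theorem adj_of_adj_of_not_lt (hG : Lefthanded G) {w u v : V} (hu : G.Adj w u) (hv : G.Adj w v)
    (hwu : ¬ u < w) (hwv : ¬ v < w) (huv : u ≠ v) : G.Adj u v :=
  hG.adj_of_lt_of_lt hu hv (hG.lt_of_adj_of_not_lt hu hwu) (hG.lt_of_adj_of_not_lt hv hwv) huv

end Lefthanded

theorem stmt14_general {V : Type*} [PartialOrder V] (G : SimpleGraph V)
    (hG : Lefthanded G) (n : ℕ) (hn : 4 ≤ n) (f : ZMod n ↪ V) :
    ¬ (∀ a b : ZMod n, G.Adj (f a) (f b) ↔ (a ≠ b ∧ (a - b = 1 ∨ b - a = 1))) := by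
  intro hcycle
  have : NeZero n := ⟨by omega⟩
  have h1 : ((1 : ℕ) : ZMod n) ≠ 0 := ZMod.natCast_ne_zero_of_pos_of_lt (by omega) (by omega)
  have h2 : ((2 : ℕ) : ZMod n) ≠ 0 := ZMod.natCast_ne_zero_of_pos_of_lt (by omega) (by omega)
  have h3 : ((3 : ℕ) : ZMod n) ≠ 0 := ZMod.natCast_ne_zero_of_pos_of_lt (by omega) (by omega)
  push_cast at h1 h2 h3
  have adj_succ (j : ZMod n) : G.Adj (f j) (f (j + 1)) :=
    (hcycle _ _).2 ⟨fun h => h1 (by linear_combination -h), Or.inr (by ring)⟩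
  obtain ⟨_, hmin⟩ := (Set.finite_range f).exists_minimal (Set.range_nonempty f)
  obtain ⟨i, rfl⟩ := hmin.prop
  have hprev : G.Adj (f i) (f (i - 1)) := by simpa using (adj_succ (i - 1)).symm
  have hchord : G.Adj (f (i - 1)) (f (i + 1)) :=
    hG.adj_of_adj_of_not_lt hprev (adj_succ i) (hmin.not_lt ⟨_, rfl⟩) (hmin.not_lt ⟨_, rfl⟩)
      (f.injective.ne fun h => h2 (by linear_combination -h))
  obtain ⟨-, h | h⟩ := (hcycle _ _).1 hchord
  · exact h3 (by linear_combination -h)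
  · exact h1 (by linear_combination h)

theorem stmt14 {V : Type*} [Fintype V] [PartialOrder V] (G : SimpleGraph V)
    (hG : Lefthanded G) (n : ℕ) (hn : 4 ≤ n) (f : ZMod n ↪ V) :
    ¬ (∀ a b : ZMod n, G.Adj (f a) (f b) ↔ (a ≠ b ∧ (a - b = 1 ∨ b - a = 1))) :=
  stmt14_general G hG n hn f
end
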